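/- Let n ≥ 1, 0 < λ ≤ Λ, and τ > 0. Let f : ℝⁿ → ℝ be continuous, ℤⁿ-periodic, and nonnegative, and let u ∈ C²(ℝⁿ) be ℤⁿ-periodic with τ u(x) − 𝒫⁻(D²u(x)) = f(x) for all x ∈ ℝⁿ. Then τ ∫_{[0,1)ⁿ} |u(x)| dx + ((Λ−λ)/2) ∫_{[0,1)ⁿ} |D²u(x)| dx = ∫_{[0,1)ⁿ} f(x) dx. -/

import Mathlib

/-!
Since `𝒫⁻(M) = (λ+Λ)/2 · tr M − (Λ−λ)/2 · |M|`, the equation reads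
`(Λ−λ)/2 · |D²u| = f − τ u + (λ+Λ)/2 · Δu`. At a global minimum of the periodic function `u`
the Hessian is positive semidefinite, so `τ u = f + 𝒫⁻(D²u) ≥ 0` there; hence `u ≥ 0` and
`|u| = u`. Integrating over a period, `∫ Δu = 0` by the divergence theorem, because the fluxes
of `∇u` through opposite faces of the unit cube cancel.
-/

open MeasureTheory Metric Set ENNReal RealInnerProductSpace

noncomputable section

/-- The Pucci maximal operator `𝒫⁺`: for a symmetric matrix with eigenvalues `μᵢ`,
`𝒫⁺(M) = Λ ∑ max(μᵢ,0) − λ ∑ max(−μᵢ,0)` (junk value `0` on non-symmetric matrices). -/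
def pucciSup {n : ℕ} (lam Lam : ℝ) (M : Matrix (Fin n) (Fin n) ℝ) : ℝ :=
  if h : M.IsHermitian then
    Lam * ∑ i, max (h.eigenvalues i) 0 - lam * ∑ i, max (-h.eigenvalues i) 0
  else 0

/-- The Pucci minimal operator `𝒫⁻`: for a symmetric matrix with eigenvalues `μᵢ`,
`𝒫⁻(M) = λ ∑ max(μᵢ,0) − Λ ∑ max(−μᵢ,0)` (junk value `0` on non-symmetric matrices). -/
def pucciInf {n : ℕ} (lam Lam : ℝ) (M : Matrix (Fin n) (Fin n) ℝ) : ℝ :=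
  if h : M.IsHermitian then
    lam * ∑ i, max (h.eigenvalues i) 0 - Lam * ∑ i, max (-h.eigenvalues i) 0
  else 0

/-- `|M|`: the sum of the absolute values of the eigenvalues of a symmetric matrix
(junk value `0` on non-symmetric matrices). -/
def matAbs {n : ℕ} (M : Matrix (Fin n) (Fin n) ℝ) : ℝ :=
  if h : M.IsHermitian then ∑ i, |h.eigenvalues i| else 0

/-- The Hessian matrix `D²u(x)` of second-order partial derivatives. -/
def hess {n : ℕ} (u : EuclideanSpace ℝ (Fin n) → ℝ) (x : EuclideanSpace ℝ (Fin n)) :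
    Matrix (Fin n) (Fin n) ℝ :=
  fun i j =>
    fderiv ℝ (fun y => fderiv ℝ u y (EuclideanSpace.single j 1)) x (EuclideanSpace.single i 1)

/-- `Q_r`: the open cube of side length `r` centered at the origin. -/
def cube (n : ℕ) (r : ℝ) : Set (EuclideanSpace ℝ (Fin n)) := {x | ∀ i, |x i| < r / 2}

/-- `ℝ≥0∞`-valued `L_p` quasinorm `(∫_E |g|^p)^{1/p}` w.r.t. Lebesgue measure. -/
def lpE {α : Type*} [MeasureSpace α] (p : ℝ) (E : Set α) (g : α → ℝ) : ℝ≥0∞ :=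
  (∫⁻ z in E, ENNReal.ofReal (|g z| ^ p)) ^ (1 / p)

/-- The fundamental domain `[0,1)ⁿ` of the torus `𝕋ⁿ = ℝⁿ/ℤⁿ`. -/
def fund (n : ℕ) : Set (EuclideanSpace ℝ (Fin n)) := {x | ∀ i, x i ∈ Ico (0:ℝ) 1}

/-- `ℤⁿ`-periodicity. -/
def ZPeriodic {n : ℕ} (g : EuclideanSpace ℝ (Fin n) → ℝ) : Prop :=
  ∀ (x : EuclideanSpace ℝ (Fin n)) (y : Fin n → ℤ),
    g (x + (WithLp.equiv 2 (Fin n → ℝ)).symm fun i => (y i : ℝ)) = g x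

theorem IsLocalMin.deriv_deriv_nonneg {f : ℝ → ℝ} {a : ℝ} (h : IsLocalMin f a)
    (hc : ContinuousAt f a) : 0 ≤ deriv (deriv f) a := by
  by_contra! hneg
  -- a negative second derivative would also make `a` a local maximum
  have hconst : f =ᶠ[nhds a] fun _ => f a :=
    (h.and (isLocalMax_of_deriv_deriv_neg hneg h.deriv_eq_zero hc)).mono
      fun x hx => le_antisymm hx.2 hx.1
  rw [hconst.deriv.deriv_eq] at hneg
  simp at hneg

theorem IsLocalMin.fderiv_fderiv_apply_self_nonneg {E : Type*} [NormedAddCommGroup E]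
    [NormedSpace ℝ E] {u : E → ℝ} {a : E} (h : IsLocalMin u a) (hu : Differentiable ℝ u)
    (hu' : DifferentiableAt ℝ (fderiv ℝ u) a) (v : E) : 0 ≤ fderiv ℝ (fderiv ℝ u) a v v := by
  have hline : ∀ t : ℝ, HasDerivAt (fun s : ℝ => a + s • v) v t := fun t => by
    simpa using ((hasDerivAt_id t).smul_const v).const_add a
  have hderiv : deriv (fun t : ℝ => u (a + t • v)) = fun t => fderiv ℝ u (a + t • v) v :=
    funext fun t => ((hu _).hasFDerivAt.comp_hasDerivAt t (hline t)).deriv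
  have hderiv2 : HasDerivAt (fun t : ℝ => fderiv ℝ u (a + t • v) v)
      (fderiv ℝ (fderiv ℝ u) a v v) 0 := by
    have hpartial : HasFDerivAt (fun y => fderiv ℝ u y v)
        ((fderiv ℝ (fderiv ℝ u) a).flip v) (a + (0 : ℝ) • v) := by
      rw [zero_smul, add_zero]
      simpa using hu'.hasFDerivAt.clm_apply (hasFDerivAt_const v a)
    exact hpartial.comp_hasDerivAt (0 : ℝ) (hline 0)
  have hmin : IsLocalMin (fun t : ℝ => u (a + t • v)) 0 :=
    IsLocalMin.comp_continuous (g := fun t : ℝ => a + t • v) (by simpa using h) (by fun_prop)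
  have hnonneg := hmin.deriv_deriv_nonneg (hu.continuous.comp (by fun_prop)).continuousAt
  rwa [hderiv, hderiv2.deriv] at hnonneg

theorem ContDiff.fderiv_apply_const {E : Type*} [NormedAddCommGroup E] [NormedSpace ℝ E]
    {g : E → ℝ} (hg : ContDiff ℝ 2 g) (v : E) : ContDiff ℝ 1 fun y => fderiv ℝ g y v :=
  (hg.fderiv_right (m := 1) le_rfl).clm_apply contDiff_const

section Pucci

variable {n : ℕ} {lam Lam : ℝ} {M : Matrix (Fin n) (Fin n) ℝ}

theorem pucciInf_eq_trace_sub_matAbs (h : M.IsHermitian) :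
    pucciInf lam Lam M = (lam + Lam) / 2 * M.trace - (Lam - lam) / 2 * matAbs M := by
  rw [pucciInf, matAbs, dif_pos h, dif_pos h, h.trace_eq_sum_eigenvalues]
  simp only [RCLike.ofReal_real_eq_id, id, Finset.mul_sum, ← Finset.sum_sub_distrib]
  refine Finset.sum_congr rfl fun i _ => ?_
  rcases le_or_gt 0 (h.eigenvalues i) with hi | hi
  · rw [max_eq_left hi, max_eq_right (by linarith), abs_of_nonneg hi]; ring
  · rw [max_eq_right hi.le, max_eq_left (by linarith), abs_of_neg hi]; ring

theorem pucciInf_nonneg (hlam : 0 ≤ lam) (hM : M.PosSemidef) : 0 ≤ pucciInf lam Lam M := by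
  have hneg : ∀ i, max (-hM.1.eigenvalues i) 0 = 0 := fun i =>
    max_eq_right (neg_nonpos.2 (hM.eigenvalues_nonneg i))
  rw [pucciInf, dif_pos hM.1]
  simp only [hneg, Finset.sum_const_zero, mul_zero, sub_zero]
  exact mul_nonneg hlam (Finset.sum_nonneg fun i _ => le_max_right _ _)

end Pucci

section Hessian

open Matrix

variable {n : ℕ} {u : EuclideanSpace ℝ (Fin n) → ℝ} {x : EuclideanSpace ℝ (Fin n)}

theorem hess_apply (hu : DifferentiableAt ℝ (fderiv ℝ u) x) (i j : Fin n) :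
    hess u x i j =
      fderiv ℝ (fderiv ℝ u) x (EuclideanSpace.single i 1) (EuclideanSpace.single j 1) := by
  rw [hess, fderiv_clm_apply hu (differentiableAt_const _)]
  simp

theorem hess_isHermitian (hu : ContDiff ℝ 2 u) (x : EuclideanSpace ℝ (Fin n)) :
    (hess u x).IsHermitian := by
  have hd := (hu.fderiv_right (m := 1) le_rfl).differentiable one_ne_zero x
  ext i j
  simp only [conjTranspose_apply, star_trivial, hess_apply hd]
  exact hu.contDiffAt.isSymmSndFDerivAt (by simp) _ _

theorem dotProduct_hess_mulVec (hu : DifferentiableAt ℝ (fderiv ℝ u) x) (v : Fin n → ℝ) :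
    v ⬝ᵥ hess u x *ᵥ v = fderiv ℝ (fderiv ℝ u) x (WithLp.toLp 2 v) (WithLp.toLp 2 v) := by
  have hv : WithLp.toLp 2 v = ∑ i, v i • EuclideanSpace.single i (1 : ℝ) := by
    simpa using ((EuclideanSpace.basisFun (Fin n) ℝ).sum_repr (WithLp.toLp 2 v)).symm
  rw [hv]
  simp only [dotProduct, mulVec, hess_apply hu, Finset.mul_sum, map_sum, _root_.map_smul,
    _root_.sum_apply, _root_.smul_apply, smul_eq_mul]
  rw [Finset.sum_comm]
  exact Finset.sum_congr rfl fun i _ => Finset.sum_congr rfl fun j _ => by ring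

theorem IsLocalMin.hess_posSemidef (h : IsLocalMin u x) (hu : ContDiff ℝ 2 u) :
    (hess u x).PosSemidef := by
  have hd := (hu.fderiv_right (m := 1) le_rfl).differentiable one_ne_zero x
  refine PosSemidef.of_dotProduct_mulVec_nonneg (hess_isHermitian hu x) fun v => ?_
  rw [star_trivial, dotProduct_hess_mulVec hd]
  exact h.fderiv_fderiv_apply_self_nonneg (hu.differentiable two_ne_zero) hd _

theorem trace_hess (x : EuclideanSpace ℝ (Fin n)) : (hess u x).trace =
    ∑ i, fderiv ℝ (fun y => fderiv ℝ u y (EuclideanSpace.single i 1)) x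
      (EuclideanSpace.single i 1) := rfl

theorem continuous_trace_hess (hu : ContDiff ℝ 2 u) : Continuous fun x => (hess u x).trace := by
  simp only [trace_hess]
  exact continuous_finsetSum _ fun i _ =>
    ((hu.fderiv_apply_const _).continuous_fderiv one_ne_zero).clm_apply continuous_const

end Hessian

section Torus

variable {n : ℕ}

theorem preimage_toLp_fund : WithLp.toLp 2 ⁻¹' fund n = univ.pi fun _ => Ico (0 : ℝ) 1 := by
  ext p
  simp [fund]

theorem measurableSet_fund : MeasurableSet (fund n) := by
  have : fund n = WithLp.ofLp ⁻¹' univ.pi fun _ => Ico (0 : ℝ) 1 := by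
    ext x
    simp [fund]
  rw [this]
  exact (MeasurableSet.univ_pi fun _ => measurableSet_Ico).preimage (by fun_prop)

theorem fund_subset_image_Icc : fund n ⊆ WithLp.toLp 2 '' Icc 0 1 :=
  fun x hx => ⟨WithLp.ofLp x, ⟨fun i => (hx i).1, fun i => (hx i).2.le⟩, rfl⟩

theorem Continuous.integrableOn_fund {g : EuclideanSpace ℝ (Fin n) → ℝ} (hg : Continuous g) :
    IntegrableOn g (fund n) :=
  (hg.continuousOn.integrableOn_compact
    (isCompact_Icc.image (PiLp.continuous_toLp 2 _))).mono_set fund_subset_image_Icc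

theorem setIntegral_fund (g : EuclideanSpace ℝ (Fin n) → ℝ) :
    ∫ x in fund n, g x = ∫ p in Icc (0 : Fin n → ℝ) 1, g (WithLp.toLp 2 p) := by
  rw [← (EuclideanSpace.volume_preserving_symm_measurableEquiv_toLp (Fin n)).symm
    |>.setIntegral_preimage_emb (MeasurableEquiv.toLp 2 (Fin n → ℝ)).measurableEmbedding]
  change ∫ p in WithLp.toLp 2 ⁻¹' fund n, g (WithLp.toLp 2 p) = _
  rw [preimage_toLp_fund, volume_pi]
  exact setIntegral_congr_set Measure.univ_pi_Ico_ae_eq_Icc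

theorem ZPeriodic.exists_mem_fund_eq {g : EuclideanSpace ℝ (Fin n) → ℝ} (hg : ZPeriodic g)
    (x : EuclideanSpace ℝ (Fin n)) : ∃ y ∈ fund n, g y = g x := by
  refine ⟨x + WithLp.toLp 2 fun i => ((-⌊x i⌋ : ℤ) : ℝ), fun i => ?_, hg x _⟩
  simp [← sub_eq_add_neg, Int.fract_nonneg, Int.fract_lt_one]

theorem ZPeriodic.exists_forall_le {g : EuclideanSpace ℝ (Fin n) → ℝ} (hc : Continuous g)
    (hg : ZPeriodic g) : ∃ a, ∀ x, g a ≤ g x := by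
  obtain ⟨a, -, ha⟩ := (isCompact_Icc.image (PiLp.continuous_toLp 2 _)).exists_isMinOn
    ⟨WithLp.toLp 2 0, 0, left_mem_Icc.2 zero_le_one, rfl⟩ hc.continuousOn
  refine ⟨a, fun x => ?_⟩
  obtain ⟨y, hy, hyx⟩ := hg.exists_mem_fund_eq x
  exact hyx ▸ ha (fund_subset_image_Icc hy)

theorem ZPeriodic.fderiv_apply {g : EuclideanSpace ℝ (Fin n) → ℝ} (hg : ZPeriodic g)
    (v : EuclideanSpace ℝ (Fin n)) : ZPeriodic fun x => fderiv ℝ g x v := by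
  intro x y
  dsimp only
  rw [← fderiv_comp_add_right, funext fun z => hg z y]

end Torus

section Divergence

theorem Fin.insertNth_eq_insertNth_zero_add_single {m : ℕ} {α : Type*} [AddZeroClass α]
    (i : Fin (m + 1)) (a : α) (x : Fin m → α) :
    i.insertNth (α := fun _ => α) a x = i.insertNth (α := fun _ => α) 0 x + Pi.single i a := by
  refine Fin.insertNth_eq_iff.2 ⟨by simp, ?_⟩
  ext j
  simp [Fin.removeNth, Fin.succAbove_ne]

theorem integral_Icc_sum_fderiv_eq_zero_of_periodic {m : ℕ}
    {G : Fin (m + 1) → (Fin (m + 1) → ℝ) → ℝ} (hG : ∀ i, ContDiff ℝ 1 (G i))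
    (hGp : ∀ i x, G i (x + Pi.single i 1) = G i x) :
    ∫ x in Icc (0 : Fin (m + 1) → ℝ) 1, ∑ i, fderiv ℝ (G i) x (Pi.single i 1) = 0 := by
  have hdiff : ∀ i, Differentiable ℝ (G i) := fun i => (hG i).differentiable one_ne_zero
  have hint : IntegrableOn (fun x => ∑ i, fderiv ℝ (G i) x (Pi.single i 1))
      (Icc (0 : Fin (m + 1) → ℝ) 1) :=
    (continuous_finsetSum _ fun i _ =>
      ((hG i).continuous_fderiv one_ne_zero).clm_apply continuous_const).integrableOn_Icc
  rw [integral_divergence_of_hasFDerivAt_off_countable' 0 1 zero_le_one G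
    (fun i x => fderiv ℝ (G i) x) ∅ countable_empty (fun i => (hG i).continuous.continuousOn)
    (fun x _ i => (hdiff i x).hasFDerivAt) hint]
  refine Finset.sum_eq_zero fun i _ => sub_eq_zero.2 <| setIntegral_congr_fun measurableSet_Icc
    fun x _ => ?_
  rw [Pi.one_apply, Pi.zero_apply, Fin.insertNth_eq_insertNth_zero_add_single i (1 : ℝ), hGp]

variable {n : ℕ}

theorem integral_fund_sum_fderiv_eq_zero {F : Fin n → EuclideanSpace ℝ (Fin n) → ℝ}
    (hF : ∀ i, ContDiff ℝ 1 (F i)) (hFp : ∀ i, ZPeriodic (F i)) :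
    ∫ x in fund n, ∑ i, fderiv ℝ (F i) x (EuclideanSpace.single i 1) = 0 := by
  cases n with
  | zero => simp
  | succ m =>
    let e := (EuclideanSpace.equiv (Fin (m + 1)) ℝ).symm
    have hchain : ∀ i p, fderiv ℝ (F i) (WithLp.toLp 2 p) (EuclideanSpace.single i 1) =
        fderiv ℝ (F i ∘ e) p (Pi.single i 1) := fun i p => by
      rw [e.comp_right_fderiv]; rfl
    simp_rw [setIntegral_fund, hchain]
    refine integral_Icc_sum_fderiv_eq_zero_of_periodic (fun i => (hF i).comp e.contDiff)
      fun i x => ?_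
    have hshift : e (x + Pi.single i 1) =
        e x + (WithLp.equiv 2 _).symm fun j => ((Pi.single i 1 : Fin (m + 1) → ℤ) j : ℝ) := by
      rw [map_add]
      congr 1
      ext j
      simp [e, Pi.single_apply]
    exact (congrArg (F i) hshift).trans (hFp i _ _)

theorem integral_fund_trace_hess {u : EuclideanSpace ℝ (Fin n) → ℝ} (hu : ContDiff ℝ 2 u)
    (hup : ZPeriodic u) : ∫ x in fund n, (hess u x).trace = 0 := by
  simp only [trace_hess]
  exact integral_fund_sum_fderiv_eq_zero (fun i => hu.fderiv_apply_const _)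
    fun i => hup.fderiv_apply _

end Divergence

theorem ZPeriodic.nonneg_of_pucciInf_le {n : ℕ} {lam Lam τ : ℝ}
    {u : EuclideanSpace ℝ (Fin n) → ℝ} (hup : ZPeriodic u) (hu : ContDiff ℝ 2 u)
    (hlam : 0 ≤ lam) (hτ : 0 < τ) (hsuper : ∀ x, pucciInf lam Lam (hess u x) ≤ τ * u x)
    (x : EuclideanSpace ℝ (Fin n)) : 0 ≤ u x := by
  obtain ⟨a, ha⟩ := hup.exists_forall_le hu.continuous
  have hmin : IsLocalMin u a := Filter.Eventually.of_forall ha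
  have hua : 0 ≤ τ * u a := (pucciInf_nonneg hlam (hmin.hess_posSemidef hu)).trans (hsuper a)
  exact (nonneg_of_mul_nonneg_right hua hτ).trans (ha x)

theorem stmt16_general (n : ℕ) (lam Lam : ℝ) (hlam : 0 < lam)
    (τ : ℝ) (hτ : 0 < τ)
    (f u : EuclideanSpace ℝ (Fin n) → ℝ)
    (hfc : Continuous f) (hf0 : ∀ x, 0 ≤ f x)
    (hu : ContDiff ℝ 2 u) (hup : ZPeriodic u)
    (heq : ∀ x, τ * u x - pucciInf lam Lam (hess u x) = f x) :
    τ * (∫ x in fund n, |u x|) + (Lam - lam) / 2 * (∫ x in fund n, matAbs (hess u x)) =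
      ∫ x in fund n, f x := by
  have hpucci x := pucciInf_eq_trace_sub_matAbs (lam := lam) (Lam := Lam) (hess_isHermitian hu x)
  have hu0 : ∀ x, 0 ≤ u x :=
    hup.nonneg_of_pucciInf_le hu hlam.le hτ fun x => by linarith [heq x, hf0 x]
  have hmatAbs : ∀ x, (Lam - lam) / 2 * matAbs (hess u x) =
      f x - τ * u x + (lam + Lam) / 2 * (hess u x).trace := fun x => by
    linarith [heq x, hpucci x]
  have hfi := hfc.integrableOn_fund
  have hui := hu.continuous.integrableOn_fund.const_mul τ
  have hti := (continuous_trace_hess hu).integrableOn_fund.const_mul ((lam + Lam) / 2)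
  rw [setIntegral_congr_fun measurableSet_fund fun x _ => abs_of_nonneg (hu0 x),
    ← integral_const_mul ((Lam - lam) / 2),
    setIntegral_congr_fun measurableSet_fund fun x _ => hmatAbs x,
    integral_add (f := fun x => f x - τ * u x) (hfi.sub hui) hti, integral_sub hfi hui,
    integral_const_mul, integral_const_mul, integral_fund_trace_hess hu hup]
  ring

/-- Global `W²_1` identity on the torus for nonnegative data (Theorem `thm49`). -/
theorem stmt16 (n : ℕ) (hn : 1 ≤ n) (lam Lam : ℝ) (hlam : 0 < lam) (hLam : lam ≤ Lam)
    (τ : ℝ) (hτ : 0 < τ)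
    (f u : EuclideanSpace ℝ (Fin n) → ℝ)
    (hfc : Continuous f) (hfp : ZPeriodic f) (hf0 : ∀ x, 0 ≤ f x)
    (hu : ContDiff ℝ 2 u) (hup : ZPeriodic u)
    (heq : ∀ x, τ * u x - pucciInf lam Lam (hess u x) = f x) :
    τ * (∫ x in fund n, |u x|) + (Lam - lam) / 2 * (∫ x in fund n, matAbs (hess u x)) =
      ∫ x in fund n, f x :=
  stmt16_general n lam Lam hlam τ hτ f u hfc hf0 hu hup heq
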